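/- arXiv:1504.05679 — 4 statements merged into one kernel-verified Lean document; each statement's English description precedes it below -/
import Mathlib

section
/- For all real numbers s₁, s₂ ≥ 0 and p ∈ [0,1], the achievable uplink sum rate is within gap 2 of the outer bound: p(1−p)(C(s₁) + C(s₂)) + p²·C(s₁ + s₂) − 1 ≥ p·[(1−p)(C(s₁) + C(s₂)) + p·C(s₁ + s₂ + 2√(s₁ s₂))] − 2. -/
/-!
The two sides differ only in the term `p² C(·)`, so the claim amounts to
`p² (C (s₁ + s₂ + 2√(s₁s₂)) - C (s₁ + s₂)) ≤ 1`. By AM-GM, `2√(s₁s₂) ≤ s₁ + s₂`, so the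
coherent (beamforming) SNR is at most `2 (s₁ + s₂) + 1`, i.e. `1 + SNR` at most doubles and
`C` grows by at most one bit; and `p² ≤ 1`.
-/

noncomputable def C (x : ℝ) : ℝ := Real.logb 2 (1 + x)

lemma two_mul_sqrt_mul_le_add {a b : ℝ} (ha : 0 ≤ a) (hb : 0 ≤ b) :
    2 * Real.sqrt (a * b) ≤ a + b := by
  have h := two_mul_le_add_sq (Real.sqrt a) (Real.sqrt b)
  rwa [Real.sq_sqrt ha, Real.sq_sqrt hb, mul_assoc, ← Real.sqrt_mul ha] at h

lemma C_mono {x y : ℝ} (hx : -1 < x) (hxy : x ≤ y) : C x ≤ C y :=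
  Real.logb_le_logb_of_le one_lt_two (by linarith) (by linarith)

lemma C_two_mul_add_one {x : ℝ} (hx : -1 < x) : C (2 * x + 1) = C x + 1 := by
  rw [C, C, show 1 + (2 * x + 1) = 2 * (1 + x) by ring,
    Real.logb_mul two_ne_zero (by linarith), Real.logb_self_eq_one one_lt_two, add_comm]

lemma C_add_two_sqrt_mul_le {a b : ℝ} (ha : 0 ≤ a) (hb : 0 ≤ b) :
    C (a + b + 2 * Real.sqrt (a * b)) ≤ C (a + b) + 1 := by
  rw [← C_two_mul_add_one (by linarith)]
  exact C_mono (by linarith [Real.sqrt_nonneg (a * b)])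
    (by linarith [two_mul_sqrt_mul_le_add ha hb])

theorem stmt_1 (s₁ s₂ p : ℝ) (hs₁ : 0 ≤ s₁) (hs₂ : 0 ≤ s₂)
    (hp0 : 0 ≤ p) (hp1 : p ≤ 1) :
    p * (1 - p) * (C s₁ + C s₂) + p ^ 2 * C (s₁ + s₂) - 1 ≥
      p * ((1 - p) * (C s₁ + C s₂) + p * C (s₁ + s₂ + 2 * Real.sqrt (s₁ * s₂))) - 2 := by
  have hgap := mul_le_mul_of_nonneg_left (C_add_two_sqrt_mul_le hs₁ hs₂) (sq_nonneg p)
  have hp_sq : p ^ 2 ≤ 1 := pow_le_one₀ hp0 hp1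
  linear_combination hgap + hp_sq
end

section
/- For all real numbers s₁ ≥ s₂ > 0 and p ∈ [0,1]: (p(2−p)/(3−p))·C(s₁) + (p/(3−p))·log₂(s₁/s₂) ≥ p·(C(s₁) − C(s₂)) + (p(2−p)/(3−p))·C(s₂). -/
lemma one_add_div_one_add_le_div {x y : ℝ} (hy : 0 < y) (hyx : y ≤ x) :
    (1 + x) / (1 + y) ≤ x / y := by
  rw [div_le_div_iff₀ (by linarith) hy]
  linarith

lemma C_sub_C_le_logb_div {x y : ℝ} (hy : 0 < y) (hyx : y ≤ x) :
    C x - C y ≤ Real.logb 2 (x / y) := by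
  have hx : 0 < x := hy.trans_le hyx
  rw [C, C, ← Real.logb_div (by linarith) (by linarith)]
  exact Real.logb_le_logb_of_le one_lt_two (by positivity) (one_add_div_one_add_le_div hy hyx)

theorem stmt_8 (s₁ s₂ p : ℝ) (hs₂ : 0 < s₂) (hs : s₂ ≤ s₁) (hp0 : 0 ≤ p) (hp1 : p ≤ 1) :
    (p * (2 - p) / (3 - p)) * C s₁ + (p / (3 - p)) * Real.logb 2 (s₁ / s₂) ≥
      p * (C s₁ - C s₂) + (p * (2 - p) / (3 - p)) * C s₂ := by
  have h3p : 0 < 3 - p := by linarith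
  have hdiff : (p * (2 - p) / (3 - p)) * C s₁ + (p / (3 - p)) * Real.logb 2 (s₁ / s₂) -
      (p * (C s₁ - C s₂) + (p * (2 - p) / (3 - p)) * C s₂)
      = p / (3 - p) * (Real.logb 2 (s₁ / s₂) - (C s₁ - C s₂)) := by
    field_simp
    ring
  have hgap : 0 ≤ Real.logb 2 (s₁ / s₂) - (C s₁ - C s₂) :=
    sub_nonneg.mpr (C_sub_C_le_logb_div hs₂ hs)
  rw [ge_iff_le, ← sub_nonneg, hdiff]
  exact mul_nonneg (div_nonneg hp0 h3p.le) hgap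
end

section
/- For all real numbers s ≥ 2 and p ∈ [0,1]: (1/(3−p))·[ p(1−p)·log₂(1 + (1 − 1/s)/(8/s + 1/s + 1/s)) + p·log₂(1 + (1 − 1/s)/(1/s + 1/s)) ] ≥ (p(2−p)/(3−p))·C(s) − (p(1−p)/(3−p))·log₂(10) − p/(3−p). -/
/-!
With total interference-plus-noise power `a / s`, the SINR of a stream of power `1 - 1 / s` is
`(s - 1) / a`, so both rates are `log₂ (s + a - 1) - log₂ a`: with `a = 10` for the erased symbols
and `a = 2` for the others. Multiplying by `3 - p`, the claimed inequality becomes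
`p (1 - p) (log₂ (s + 9) - log₂ (s + 1)) ≥ 0`, which holds by monotonicity of `log₂`.
-/

open Real

lemma one_add_sub_inv_div_div {s a : ℝ} (hs : s ≠ 0) (ha : a ≠ 0) :
    1 + (1 - 1 / s) / (a / s) = (s + a - 1) / a := by
  field_simp
  ring

lemma logb_one_add_sub_inv_div_div {b s a : ℝ} (hs : 0 < s) (ha : 1 ≤ a) :
    logb b (1 + (1 - 1 / s) / (a / s)) = logb b (s + a - 1) - logb b a := by
  rw [one_add_sub_inv_div_div hs.ne' (by positivity), logb_div (by linarith) (by positivity)]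

lemma rate_combination_ge {p A B L : ℝ} (hp0 : 0 ≤ p) (hp1 : p ≤ 1) (hBA : B ≤ A) :
    1 / (3 - p) * (p * (1 - p) * (A - L) + p * (B - 1)) ≥
      p * (2 - p) / (3 - p) * B - p * (1 - p) / (3 - p) * L - p / (3 - p) := by
  have h3p : 0 < 3 - p := by linarith
  have hgap : 1 / (3 - p) * (p * (1 - p) * (A - L) + p * (B - 1)) -
      (p * (2 - p) / (3 - p) * B - p * (1 - p) / (3 - p) * L - p / (3 - p)) =
        p * (1 - p) * (A - B) / (3 - p) := by
    field_simp
    ring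
  have : 0 ≤ p * (1 - p) * (A - B) / (3 - p) :=
    div_nonneg (mul_nonneg (mul_nonneg hp0 (by linarith)) (by linarith)) h3p.le
  linarith

theorem stmt_9 (s p : ℝ) (hs : 2 ≤ s) (hp0 : 0 ≤ p) (hp1 : p ≤ 1) :
    (1 / (3 - p)) *
        (p * (1 - p) * Real.logb 2 (1 + (1 - 1 / s) / (8 / s + 1 / s + 1 / s)) +
          p * Real.logb 2 (1 + (1 - 1 / s) / (1 / s + 1 / s))) ≥
      (p * (2 - p) / (3 - p)) * C s - (p * (1 - p) / (3 - p)) * Real.logb 2 10 -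
        p / (3 - p) := by
  have hs0 : 0 < s := by linarith
  rw [show 8 / s + 1 / s + 1 / s = 10 / s by ring, show 1 / s + 1 / s = 2 / s by ring,
    logb_one_add_sub_inv_div_div hs0 (by norm_num), logb_one_add_sub_inv_div_div hs0 one_le_two,
    logb_self_eq_one one_lt_two, show s + 10 - 1 = s + 9 by ring, show s + 2 - 1 = s + 1 by ring,
    C, add_comm 1 s]
  exact rate_combination_ge hp0 hp1 (logb_le_logb_of_le one_lt_two (by linarith) (by linarith))
end

section
/- For all real numbers s₁ ≥ s₂ ≥ 1 and p ∈ [0,1], the Gaussian superposition coding rates R₁ = p·log₂(1 + s₁·(1/s₂)) and R₂ = p·log₂(1 + (s₂·(1 − 1/s₂))/(s₂·(1/s₂) + 1)) satisfy R₁ ≥ p(C(s₁) − C(s₂)) and R₂ = p·C(s₂) − p; in particular the pair (R₁, R₂) is within gap (0, p) of the corner point (p(C(s₁) − C(s₂)), p·C(s₂)). -/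
theorem C_sub_C {a b : ℝ} (ha : 1 + a ≠ 0) (hb : 1 + b ≠ 0) :
    C a - C b = Real.logb 2 ((1 + a) / (1 + b)) :=
  (Real.logb_div ha hb).symm

theorem C_sub_one {x : ℝ} (hx : 1 + x ≠ 0) : C x - 1 = Real.logb 2 ((1 + x) / 2) := by
  rw [Real.logb_div hx two_ne_zero, Real.logb_self_eq_one one_lt_two, C]

theorem one_add_div_one_add_le_one_add_div {a b : ℝ} (ha : 0 ≤ a) (hb : 0 < b) :
    (1 + a) / (1 + b) ≤ 1 + a / b := by
  rw [div_le_iff₀ (by linarith), one_add_div hb.ne', div_mul_eq_mul_div, le_div_iff₀ hb]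
  nlinarith

theorem C_sub_C_le_logb_one_add_div {a b : ℝ} (ha : 0 ≤ a) (hb : 0 < b) :
    C a - C b ≤ Real.logb 2 (1 + a / b) := by
  rw [C_sub_C (by linarith) (by linarith)]
  exact Real.logb_le_logb_of_le one_lt_two (by positivity)
    (one_add_div_one_add_le_one_add_div ha hb)

theorem stmt_15_general (s₁ s₂ p : ℝ) (hs₂ : 1 ≤ s₂) (hs : s₂ ≤ s₁) (hp0 : 0 ≤ p) :
    p * Real.logb 2 (1 + s₁ * (1 / s₂)) ≥ p * (C s₁ - C s₂) ∧
    p * Real.logb 2 (1 + (s₂ * (1 - 1 / s₂)) / (s₂ * (1 / s₂) + 1)) = p * C s₂ - p := by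
  have hs₂_pos : 0 < s₂ := by linarith
  have hsinr : 1 + (s₂ * (1 - 1 / s₂)) / (s₂ * (1 / s₂) + 1) = (1 + s₂) / 2 := by
    field_simp
    ring
  constructor
  · rw [mul_one_div]
    exact mul_le_mul_of_nonneg_left (C_sub_C_le_logb_one_add_div (by linarith) hs₂_pos) hp0
  · rw [hsinr, ← C_sub_one (by linarith)]
    ring

theorem stmt_15 (s₁ s₂ p : ℝ) (hs₂ : 1 ≤ s₂) (hs : s₂ ≤ s₁) (hp0 : 0 ≤ p) (hp1 : p ≤ 1) :
    p * Real.logb 2 (1 + s₁ * (1 / s₂)) ≥ p * (C s₁ - C s₂) ∧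
    p * Real.logb 2 (1 + (s₂ * (1 - 1 / s₂)) / (s₂ * (1 / s₂) + 1)) = p * C s₂ - p :=
  stmt_15_general s₁ s₂ p hs₂ hs hp0
end
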